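/- arXiv:2306.09685 — 2 statements merged into one kernel-verified Lean document; each statement's English description precedes it below -/
import Mathlib

section
/- Let A(t) be a continuous m×m matrix function with nonnegative off-diagonal entries and column sums ≤ -δ < 0, and let b ∈ ℝ^m with b ≥ 0. Then every solution of z' = A(t)z + b with nonnegative initial condition is ultimately bounded: there exists ρ > 0 (depending only on δ, ‖b‖, m) such that for each initial condition z₀ ≥ 0 there is t₀ with ‖z(t)‖ ≤ ρ for all t ≥ t₀. -/
/-!
The ℓ¹ norm `f t = ∑ i, |z t i|` of a solution has right derivative `∑ i, σ i * z' i`, where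
`σ i = ±1` is a sign of `z t i`. Nonnegative off-diagonal entries and column sums `≤ -δ` say
that the ℓ¹ logarithmic norm of `A t` is at most `-δ`, so this right derivative is at most
`-δ * f t + ∑ i, |b i|`. Grönwall's inequality then gives
`f t ≤ (f 0 - B / δ) * exp (-δ * t) + B / δ` with `B = ∑ i, |b i|`, which is eventually below
`B / δ + 1`.
-/

open Finset Filter Set Asymptotics Topology Real Matrix

theorem hasDerivWithinAt_abs_Ici_of_eq_zero {g : ℝ → ℝ} {d x : ℝ} (hg : HasDerivAt g d x)
    (hx : g x = 0) : HasDerivWithinAt (fun t => |g t|) |d| (Ici x) x := by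
  rw [hasDerivWithinAt_iff_isLittleO]
  refine IsBigO.trans_isLittleO (IsBigO.of_bound' ?_)
    (hasDerivWithinAt_iff_isLittleO.1 (hg.hasDerivWithinAt (s := Ici x)))
  filter_upwards [self_mem_nhdsWithin] with t (ht : x ≤ t)
  have := abs_abs_sub_abs_le_abs_sub (g t) ((t - x) • d)
  rw [smul_eq_mul, abs_mul, abs_of_nonneg (sub_nonneg.2 ht)] at this
  simpa [hx] using this

theorem exists_sign_hasDerivWithinAt_abs_Ici {g : ℝ → ℝ} {d x : ℝ} (hg : HasDerivAt g d x) :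
    ∃ σ : ℝ, |σ| = 1 ∧ σ * g x = |g x| ∧
      HasDerivWithinAt (fun t => |g t|) (σ * d) (Ici x) x := by
  rcases lt_trichotomy (g x) 0 with hneg | hzero | hpos
  · have hev : (fun t => |g t|) =ᶠ[𝓝 x] fun t => -g t :=
      (hg.continuousAt.eventually_lt_const hneg).mono fun t ht => abs_of_neg ht
    exact ⟨-1, by simp, by simp [abs_of_neg hneg],
      by simpa using (hg.neg.congr_of_eventuallyEq hev).hasDerivWithinAt⟩
  · have hsign : ∃ σ : ℝ, |σ| = 1 ∧ σ * d = |d| := by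
      rcases le_or_gt 0 d with hd | hd
      · exact ⟨1, by simp, by simp [abs_of_nonneg hd]⟩
      · exact ⟨-1, by simp, by simp [abs_of_neg hd]⟩
    obtain ⟨σ, hσ, hσd⟩ := hsign
    exact ⟨σ, hσ, by simp [hzero], hσd ▸ hasDerivWithinAt_abs_Ici_of_eq_zero hg hzero⟩
  · have hev : (fun t => |g t|) =ᶠ[𝓝 x] g :=
      (hg.continuousAt.eventually_const_lt hpos).mono fun t ht => abs_of_pos ht
    exact ⟨1, by simp, by simp [abs_of_pos hpos],
      by simpa using (hg.congr_of_eventuallyEq hev).hasDerivWithinAt⟩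

theorem sum_mul_mulVec_le_neg_mul_sum_abs {ι : Type*} [Fintype ι] {M : Matrix ι ι ℝ}
    {δ : ℝ} (hoff : ∀ i j, i ≠ j → 0 ≤ M j i) (hcol : ∀ i, ∑ j, M j i ≤ -δ)
    {σ v : ι → ℝ} (hσ : ∀ i, |σ i| = 1) (hσv : ∀ i, σ i * v i = |v i|) :
    ∑ i, σ i * (M *ᵥ v) i ≤ -δ * ∑ i, |v i| := by
  have hterm : ∀ i j, σ i * (M i j * v j) ≤ M i j * |v j| := fun i j => by
    rcases eq_or_ne i j with rfl | hij
    · rw [← hσv, mul_left_comm]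
    · calc σ i * (M i j * v j) ≤ |σ i * (M i j * v j)| := le_abs_self _
        _ = M i j * |v j| := by
          rw [abs_mul, hσ, one_mul, abs_mul, abs_of_nonneg (hoff j i hij.symm)]
  calc ∑ i, σ i * (M *ᵥ v) i = ∑ j, ∑ i, σ i * (M i j * v j) := by
        simp only [Matrix.mulVec, dotProduct, mul_sum]; exact sum_comm
    _ ≤ ∑ j, (∑ i, M i j) * |v j| := by
        gcongr with j; rw [sum_mul]; exact sum_le_sum fun i _ => hterm i j
    _ ≤ ∑ j, -δ * |v j| := by gcongr with j; exact hcol j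
    _ = -δ * ∑ i, |v i| := by rw [mul_sum]

theorem le_sub_div_mul_exp_add_div_of_deriv_right_le {f f' : ℝ → ℝ} {δ B : ℝ}
    (hδ : 0 < δ) (hf : ContinuousOn f (Ici 0))
    (hf' : ∀ x ≥ 0, HasDerivWithinAt f (f' x) (Ici x) x)
    (bound : ∀ x ≥ 0, f' x ≤ -δ * f x + B) {t : ℝ} (ht : 0 ≤ t) :
    f t ≤ (f 0 - B / δ) * exp (-δ * t) + B / δ := by
  have := le_gronwallBound_of_liminf_deriv_right_le (hf.mono Icc_subset_Ici_self)
    (fun x hx r hr => (hf' x hx.1).liminf_right_slope_le hr) le_rfl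
    (fun x hx => bound x hx.1) t ⟨ht, le_rfl⟩
  rw [gronwallBound_of_K_ne_0 (neg_ne_zero.2 hδ.ne'), sub_zero] at this
  convert this using 1
  field_simp
  ring

theorem eventually_lt_div_add_of_deriv_right_le {f f' : ℝ → ℝ} {δ B ε : ℝ} (hδ : 0 < δ)
    (hε : 0 < ε) (hf : ContinuousOn f (Ici 0))
    (hf' : ∀ x ≥ 0, HasDerivWithinAt f (f' x) (Ici x) x)
    (bound : ∀ x ≥ 0, f' x ≤ -δ * f x + B) :
    ∀ᶠ t in atTop, f t < B / δ + ε := by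
  have hdecay : Tendsto (fun t => (f 0 - B / δ) * exp (-δ * t)) atTop (𝓝 0) := by
    simpa using (tendsto_exp_atBot.comp
      (tendsto_id.const_mul_atTop_of_neg (neg_lt_zero.2 hδ))).const_mul (f 0 - B / δ)
  filter_upwards [hdecay.eventually (gt_mem_nhds hε), eventually_ge_atTop 0] with t hsmall ht
  linarith [le_sub_div_mul_exp_add_div_of_deriv_right_le hδ hf hf' bound ht]

open Finset in
theorem cooperative_inhomogeneous_ode_ultimately_bounded_general
    (m : ℕ) (A : ℝ → Matrix (Fin m) (Fin m) ℝ)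
    (hAoff : ∀ t, ∀ i j, i ≠ j → 0 ≤ A t j i)
    (δ : ℝ) (hδ : 0 < δ)
    (hcol : ∀ t, ∀ i, ∑ j, A t j i ≤ -δ)
    (b : Fin m → ℝ) :
    ∃ ρ > 0, ∀ z : ℝ → Fin m → ℝ,
      (∀ i, ∀ t : ℝ, HasDerivAt (fun s => z s i) ((∑ j, A t i j * z t j) + b i) t) →
      (∀ i, 0 ≤ z 0 i) →
      ∃ t₀ : ℝ, ∀ t ≥ t₀, ∀ i, |z t i| ≤ ρ := by
  set B := ∑ i, |b i|
  refine ⟨B / δ + 1, by positivity, fun z hz _ => ?_⟩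
  choose σ hσ hσz hσderiv using fun t i => exists_sign_hasDerivWithinAt_abs_Ici (hz i t)
  set f : ℝ → ℝ := fun t => ∑ i, |z t i|
  have hf : Continuous f := continuous_finsetSum _ fun i _ =>
    (continuous_iff_continuousAt.2 fun t => (hz i t).continuousAt).abs
  have hf' : ∀ t, HasDerivWithinAt f (∑ i, σ t i * ((A t *ᵥ z t) i + b i)) (Ici t) t :=
    fun t => HasDerivWithinAt.fun_sum fun i _ => hσderiv t i
  have bound : ∀ t, ∑ i, σ t i * ((A t *ᵥ z t) i + b i) ≤ -δ * f t + B := fun t => by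
    simp only [mul_add, sum_add_distrib]
    gcongr
    · exact sum_mul_mulVec_le_neg_mul_sum_abs (hAoff t) (hcol t) (hσ t) (hσz t)
    · exact sum_le_sum fun i _ => (le_abs_self _).trans (by rw [abs_mul, hσ, one_mul])
  obtain ⟨t₀, ht₀⟩ := eventually_atTop.1 <| eventually_lt_div_add_of_deriv_right_le
    hδ one_pos hf.continuousOn (fun t _ => hf' t) (fun t _ => bound t)
  exact ⟨t₀, fun t ht i =>
    (single_le_sum (fun j _ => abs_nonneg (z t j)) (mem_univ i)).trans (ht₀ t ht).le⟩

open Finset in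
/-- Let `A(t)` be a continuous `m×m` matrix function with nonnegative off-diagonal entries and
column sums `≤ -δ < 0`, and let `b ≥ 0`. Then there exists `ρ > 0` (depending only on the data)
such that every solution of `z' = A(t)z + b` with nonnegative initial condition is ultimately
bounded by `ρ`. -/
theorem cooperative_inhomogeneous_ode_ultimately_bounded
    (m : ℕ) (A : ℝ → Matrix (Fin m) (Fin m) ℝ)
    (hAcont : ∀ i j, Continuous fun t => A t i j)
    (hAoff : ∀ t, ∀ i j, i ≠ j → 0 ≤ A t j i)
    (δ : ℝ) (hδ : 0 < δ)
    (hcol : ∀ t, ∀ i, ∑ j, A t j i ≤ -δ)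
    (b : Fin m → ℝ) (hb : ∀ i, 0 ≤ b i) :
    ∃ ρ > 0, ∀ z : ℝ → Fin m → ℝ,
      (∀ i, ∀ t : ℝ, HasDerivAt (fun s => z s i) ((∑ j, A t i j * z t j) + b i) t) →
      (∀ i, 0 ≤ z 0 i) →
      ∃ t₀ : ℝ, ∀ t ≥ t₀, ∀ i, |z t i| ≤ ρ :=
  cooperative_inhomogeneous_ode_ultimately_bounded_general m A hAoff δ hδ hcol b
end

section
/- Consider the scalar delay equation y'(t) = -d(t)y(t) + β(t)·y(t-r)·e^{-c(t)y(t-r)} with d(t) ≥ d₀ > 0, c(t) ≥ c₀ > 0, β(t) ≤ β⁺, and a nonnegative solution y with initial segment φ ≥ 0. Then y(t) ≤ max(‖φ‖_∞, β⁺/(e·c₀·d₀)) for all t ≥ 0; in particular every nonnegative solution is bounded. -/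
/-!
The nonlinearity `u ↦ u e^{-c u}` of Nicholson's equation is at most `1 / (e c)` on `u ≥ 0`,
so along a nonnegative solution the delayed term never exceeds `β⁺ / (e c₀)` and
`y' ≤ d₀ (K - y)` with `K = β⁺ / (e c₀ d₀)`. Grönwall's inequality for this linear
differential inequality keeps `y` below `max (y 0) K`.
-/

open Real

/-- For `K < 0` the Grönwall bound is a convex combination of `δ` and its limit `-ε / K`. -/
lemma gronwallBound_le_max {δ K ε x : ℝ} (hK : K < 0) (hx : 0 ≤ x) :
    gronwallBound δ K ε x ≤ max δ (-ε / K) := by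
  rw [gronwallBound_of_K_ne_0 hK.ne]
  have hp₁ : exp (K * x) ≤ 1 := exp_le_one_iff.2 (mul_nonpos_of_nonpos_of_nonneg hK.le hx)
  calc δ * exp (K * x) + ε / K * (exp (K * x) - 1)
      = δ * exp (K * x) + -ε / K * (1 - exp (K * x)) := by ring
    _ ≤ max δ (-ε / K) * exp (K * x) + max δ (-ε / K) * (1 - exp (K * x)) := by
        gcongr
        · exact le_max_left _ _
        · exact le_max_right _ _
    _ = max δ (-ε / K) := by ring

lemma le_max_of_hasDerivAt_le_mul_sub {f f' : ℝ → ℝ} {a d M : ℝ} (hd : 0 < d)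
    (hf : ∀ x ≥ a, HasDerivAt f (f' x) x) (bound : ∀ x ≥ a, f' x ≤ d * (M - f x)) :
    ∀ x ≥ a, f x ≤ max (f a) M := by
  intro x hx
  have hgronwall := le_gronwallBound_of_liminf_deriv_right_le (f := f) (f' := f')
    (K := -d) (ε := d * M) (b := x)
    (fun z hz => (hf z hz.1).continuousAt.continuousWithinAt)
    (fun z hz _ hr => (hf z hz.1).hasDerivWithinAt.liminf_right_slope_le hr) le_rfl
    (fun z hz => by linarith [bound z hz.1]) x ⟨hx, le_rfl⟩
  calc f x ≤ gronwallBound (f a) (-d) (d * M) (x - a) := hgronwall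
    _ ≤ max (f a) (-(d * M) / -d) := gronwallBound_le_max (by linarith) (by linarith)
    _ = max (f a) M := by rw [neg_div_neg_eq, mul_div_cancel_left₀ _ hd.ne']

lemma mul_exp_neg_mul_le {c₀ c u : ℝ} (hc₀ : 0 < c₀) (hc : c₀ ≤ c) (hu : 0 ≤ u) :
    u * exp (-c * u) ≤ 1 / (exp 1 * c₀) := by
  calc u * exp (-c * u) ≤ u * exp (-(c₀ * u)) := by gcongr; nlinarith
    _ = (c₀ * u) * exp (-(c₀ * u)) / c₀ := by field_simp
    _ ≤ exp (-1) / c₀ := by gcongr; exact mul_exp_neg_le_exp_neg_one _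
    _ = 1 / (exp 1 * c₀) := by rw [exp_neg, ← one_div, div_div]

lemma nicholson_rhs_le {d₀ c₀ βp dt βt ct x u : ℝ} (hd₀ : 0 < d₀) (hc₀ : 0 < c₀)
    (hd : d₀ ≤ dt) (hc : c₀ ≤ ct) (hβ : 0 ≤ βt) (hβp : βt ≤ βp) (hx : 0 ≤ x) (hu : 0 ≤ u) :
    -dt * x + βt * u * exp (-ct * u) ≤ d₀ * (βp / (exp 1 * c₀ * d₀) - x) := by
  have hdecay : -dt * x ≤ -d₀ * x := by nlinarith
  have hdelay : βt * (u * exp (-ct * u)) ≤ βp * (1 / (exp 1 * c₀)) :=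
    mul_le_mul hβp (mul_exp_neg_mul_le hc₀ hc hu) (by positivity) (hβ.trans hβp)
  have hK : d₀ * (βp / (exp 1 * c₀ * d₀)) = βp * (1 / (exp 1 * c₀)) := by
    field_simp
  linarith [mul_assoc βt u (exp (-ct * u))]

/-- Boundedness of nonnegative solutions of the scalar Nicholson delay equation:
if `d(t) ≥ d₀ > 0`, `c(t) ≥ c₀ > 0`, `0 ≤ β(t) ≤ β⁺`, and `y` is a nonnegative solution with
initial segment bounded by `Φ`, then `y(t) ≤ max Φ (β⁺/(e·c₀·d₀))` for all `t ≥ 0`. -/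
theorem nicholson_scalar_bounded
    (d β c : ℝ → ℝ) (d₀ c₀ βp : ℝ) (hd₀ : 0 < d₀) (hc₀ : 0 < c₀)
    (hd : ∀ t, d₀ ≤ d t) (hc : ∀ t, c₀ ≤ c t) (hβ : ∀ t, 0 ≤ β t) (hβp : ∀ t, β t ≤ βp)
    (r : ℝ) (hr : 0 < r)
    (y : ℝ → ℝ) (hynn : ∀ t ≥ -r, 0 ≤ y t)
    (hode : ∀ t ≥ (0:ℝ),
      HasDerivAt y (-d t * y t + β t * y (t - r) * Real.exp (-c t * y (t - r))) t)
    (Φ : ℝ) (hΦ : ∀ s ∈ Set.Icc (-r) (0:ℝ), y s ≤ Φ) :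
    ∀ t ≥ (0:ℝ), y t ≤ max Φ (βp / (Real.exp 1 * c₀ * d₀)) := by
  have hrate : ∀ t ≥ (0:ℝ), -d t * y t + β t * y (t - r) * exp (-c t * y (t - r)) ≤
      d₀ * (βp / (exp 1 * c₀ * d₀) - y t) := fun t ht =>
    nicholson_rhs_le hd₀ hc₀ (hd t) (hc t) (hβ t) (hβp t)
      (hynn t (by linarith)) (hynn (t - r) (by linarith))
  intro t ht
  calc y t ≤ max (y 0) (βp / (exp 1 * c₀ * d₀)) :=
        le_max_of_hasDerivAt_le_mul_sub hd₀ hode hrate t ht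
    _ ≤ max Φ (βp / (exp 1 * c₀ * d₀)) :=
        max_le_max_right _ (hΦ 0 ⟨by linarith, le_rfl⟩)
end
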